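/- (Well-definedness of the Hessian Adjusted Tempering target.) Let d ≥ 1 and let π : ℝ^d → (0, ∞) be continuous and bounded with ∫_{ℝ^d} π(x)^β dx < ∞ for all β ∈ (0, ∞). Let μ₁, …, μ_K ∈ ℝ^d be mode points, let Σ₁, …, Σ_K be positive definite real d×d matrices, and let ŵ₁, …, ŵ_K > 0. Let A : ℝ^d × (0, ∞) → {1, …, K} be a measurable function such that for every x and β, A(x, β) attains the maximum over j of ŵ_j · φ(x; μ_j, Σ_j/β). Fix β ∈ (0, ∞) and define the HAT target π_β^H(x) = π(x)^β · π(μ_{A(x,β)})^{1-β} if A(x, β) = A(x, 1), and π_β^H(x) = G(x, β) otherwise, where G(x, β) = π(μ_Â) · ((2π)^d det Σ_Â)^{1/2} · φ(x; μ_Â, Σ_Â/β) / β^{d/2} with Â = A(x, β). Then 0 < ∫_{ℝ^d} π_β^H(x) dx < ∞, so that π_β^H can be normalized to a probability density. -/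

import Mathlib

/-!
On each of the finitely many measurable pieces `{A(·, β) = j, A(·, 1) = k}` the HAT target
coincides with a fixed function: a constant multiple of `π^β` when `j = k`, and a constant
multiple of the Gaussian density `φ(·; μ_j, Σ_j/β)` otherwise. Both are integrable, the latter
because a positive definite quadratic form dominates `c‖v‖²` for some `c > 0` (compactness of
the unit sphere), so the Gaussian is dominated by a product of one-dimensional Gaussians.
A piecewise combination of integrable functions is integrable, and the target is everywhere
positive, hence so is its integral.
-/

open MeasureTheory Matrix

/-- The multivariate Gaussian density
`φ(x; μ, Σ) = (2π)^{-d/2} (det Σ)^{-1/2} exp(-(1/2)(x-μ)ᵀ Σ⁻¹ (x-μ))`. -/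
noncomputable def gaussDensity (d : ℕ) (μ : Fin d → ℝ) (S : Matrix (Fin d) (Fin d) ℝ)
    (x : Fin d → ℝ) : ℝ :=
  (2 * Real.pi) ^ (-(d : ℝ) / 2) * S.det ^ (-(1 : ℝ) / 2) *
    Real.exp (-(1 / 2) * ((x - μ) ⬝ᵥ (S⁻¹ *ᵥ (x - μ))))

theorem exists_pos_mul_sq_norm_le {E : Type*} [NormedAddCommGroup E] [NormedSpace ℝ E]
    [ProperSpace E] {f : E → ℝ} (hf : Continuous f) (hpos : ∀ v, v ≠ 0 → 0 < f v)
    (hhom : ∀ (s : ℝ) (v : E), f (s • v) = s ^ 2 * f v) :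
    ∃ c, 0 < c ∧ ∀ v, c * ‖v‖ ^ 2 ≤ f v := by
  obtain ⟨c, hc, hmin⟩ := (isCompact_sphere (0 : E) 1).exists_forall_le' hf.continuousOn
    fun u hu => hpos u (ne_zero_of_mem_unit_sphere ⟨u, hu⟩)
  refine ⟨c, hc, fun v => ?_⟩
  rcases eq_or_ne v 0 with rfl | hv
  · simpa using (hhom 0 0).ge
  · have hnv : 0 < ‖v‖ := norm_pos_iff.mpr hv
    have hu : ‖v‖⁻¹ • v ∈ Metric.sphere (0 : E) 1 := by
      simp [norm_smul, hnv.ne']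
    calc c * ‖v‖ ^ 2 ≤ f (‖v‖⁻¹ • v) * ‖v‖ ^ 2 := by gcongr; exact hmin _ hu
      _ = f v := by rw [hhom]; field_simp

theorem Matrix.PosDef.exists_pos_mul_dotProduct_self_le {ι : Type*} [Fintype ι]
    {M : Matrix ι ι ℝ} (hM : M.PosDef) :
    ∃ c, 0 < c ∧ ∀ v : ι → ℝ, c * (v ⬝ᵥ v) ≤ v ⬝ᵥ M *ᵥ v := by
  obtain ⟨c, hc, hle⟩ := exists_pos_mul_sq_norm_le (E := EuclideanSpace ℝ ι)
    (f := fun w => w.ofLp ⬝ᵥ M *ᵥ w.ofLp) (by fun_prop)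
    (fun w hw => hM.dotProduct_mulVec_pos (by simpa using hw))
    fun s w => by
      simp only [WithLp.ofLp_smul, mulVec_smul, dotProduct_smul, smul_dotProduct, smul_eq_mul]
      ring
  refine ⟨c, hc, fun v => ?_⟩
  have := hle (WithLp.toLp 2 v)
  rw [EuclideanSpace.real_norm_sq_eq] at this
  simpa [dotProduct, sq] using this

theorem integrable_exp_neg_mul_dotProduct_self {ι : Type*} [Fintype ι] {b : ℝ} (hb : 0 < b) :
    Integrable fun x : ι → ℝ => Real.exp (-b * (x ⬝ᵥ x)) := by
  have h := Integrable.fintype_prod (μ := fun _ : ι => (volume : Measure ℝ))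
    fun _ => integrable_exp_neg_mul_sq hb
  rw [← volume_pi] at h
  refine h.congr (.of_forall fun x => ?_)
  simp only [← Real.exp_sum, dotProduct, Finset.mul_sum, sq]

section gaussDensity

variable {d : ℕ} (μ : Fin d → ℝ) {S : Matrix (Fin d) (Fin d) ℝ}

theorem continuous_gaussDensity (S : Matrix (Fin d) (Fin d) ℝ) :
    Continuous (gaussDensity d μ S) := by
  unfold gaussDensity
  fun_prop

theorem gaussDensity_pos (hS : S.PosDef) (x : Fin d → ℝ) : 0 < gaussDensity d μ S x := by
  have := hS.det_pos
  unfold gaussDensity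
  positivity

theorem integrable_gaussDensity (hS : S.PosDef) : Integrable (gaussDensity d μ S) := by
  obtain ⟨c, hc, hle⟩ := hS.inv.exists_pos_mul_dotProduct_self_le
  have hdom : Integrable fun x => Real.exp (-(c / 2) * ((x - μ) ⬝ᵥ (x - μ))) :=
    (integrable_exp_neg_mul_dotProduct_self (half_pos hc)).comp_sub_right μ
  refine (hdom.const_mul ((2 * Real.pi) ^ (-(d : ℝ) / 2) * S.det ^ (-(1 : ℝ) / 2))).mono'
    (continuous_gaussDensity μ S).aestronglyMeasurable (.of_forall fun x => ?_)
  rw [Real.norm_of_nonneg (gaussDensity_pos μ hS x).le, gaussDensity]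
  have := hS.det_pos
  gcongr _ * Real.exp ?_
  linarith [hle (x - μ)]

end gaussDensity

theorem integrable_of_measurable_index {α ι E : Type*} [MeasurableSpace α] {μ : Measure α}
    [NormedAddCommGroup E] [Fintype ι] [MeasurableSpace ι] [MeasurableSingletonClass ι]
    {F : ι → α → E} (hF : ∀ j, Integrable (F j) μ) {a : α → ι} (ha : Measurable a) :
    Integrable (fun x => F (a x) x) μ := by
  have hsum : (fun x => F (a x) x) = fun x => ∑ j, (a ⁻¹' {j}).indicator (F j) x := by
    funext x
    rw [Finset.sum_eq_single (a x)
      (fun j _ hj => Set.indicator_of_notMem (s := a ⁻¹' {j}) hj.symm (F j)) (by simp)]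
    simp
  rw [hsum]
  exact integrable_finsetSum _ fun j _ => (hF j).indicator (ha (measurableSet_singleton j))

theorem integral_pos_of_forall_pos {α : Type*} [MeasurableSpace α] {μ : Measure α} [NeZero μ]
    {f : α → ℝ} (hf : Integrable f μ) (hpos : ∀ x, 0 < f x) : 0 < ∫ x, f x ∂μ := by
  rw [integral_pos_iff_support_of_nonneg (fun x => (hpos x).le) hf,
    Function.support_eq_univ fun x => (hpos x).ne']
  exact Measure.measure_univ_pos.mpr (NeZero.ne μ)

theorem HAT_target_well_defined_general (d K : ℕ)
    (pr : (Fin d → ℝ) → ℝ) (hπpos : ∀ x, 0 < pr x)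
    (hπint : ∀ β : ℝ, 0 < β → Integrable (fun x : Fin d → ℝ => pr x ^ β))
    (μs : Fin K → Fin d → ℝ) (Ss : Fin K → Matrix (Fin d) (Fin d) ℝ)
    (hSs : ∀ j, (Ss j).PosDef)
    (A : (Fin d → ℝ) → ℝ → Fin K)
    (hAmeas : Measurable (Function.uncurry A))
    (β : ℝ) (hβ : 0 < β)
    (prH : (Fin d → ℝ) → ℝ)
    (hprH : ∀ x, prH x =
      if A x β = A x 1 then pr x ^ β * pr (μs (A x β)) ^ (1 - β)
      else pr (μs (A x β)) * ((2 * Real.pi) ^ (d : ℝ) * (Ss (A x β)).det) ^ ((1 : ℝ) / 2) *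
        gaussDensity d (μs (A x β)) (β⁻¹ • Ss (A x β)) x / β ^ ((d : ℝ) / 2)) :
    Integrable prH ∧ 0 < ∫ x : Fin d → ℝ, prH x := by
  have hSβ : ∀ j, (β⁻¹ • Ss j).PosDef := fun j => (hSs j).smul (inv_pos.mpr hβ)
  set F : Fin K × Fin K → (Fin d → ℝ) → ℝ := fun jk x =>
    if jk.1 = jk.2 then pr x ^ β * pr (μs jk.1) ^ (1 - β)
    else pr (μs jk.1) * ((2 * Real.pi) ^ (d : ℝ) * (Ss jk.1).det) ^ ((1 : ℝ) / 2) *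
      gaussDensity d (μs jk.1) (β⁻¹ • Ss jk.1) x / β ^ ((d : ℝ) / 2) with hF
  have hF_int : ∀ jk, Integrable (F jk) := by
    rintro ⟨j, k⟩
    by_cases hjk : j = k
    · simpa [hF, hjk] using (hπint β hβ).mul_const (pr (μs k) ^ (1 - β))
    · simpa [hF, hjk] using
        ((integrable_gaussDensity (μs j) (hSβ j)).const_mul _).div_const (β ^ ((d : ℝ) / 2))
  have hF_pos : ∀ jk x, 0 < F jk x := by
    rintro ⟨j, k⟩ x
    have := hπpos x
    have := hπpos (μs j)
    have := (hSs j).det_pos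
    have := gaussDensity_pos (μs j) (hSβ j) x
    simp only [hF]
    split_ifs <;> positivity
  have hA : ∀ b, Measurable fun x => A x b := fun b =>
    hAmeas.comp (measurable_id.prodMk measurable_const)
  have hprH_eq : prH = fun x => F (A x β, A x 1) x := funext hprH
  have hint : Integrable prH :=
    hprH_eq ▸ integrable_of_measurable_index hF_int ((hA β).prodMk (hA 1))
  exact ⟨hint, integral_pos_of_forall_pos hint fun x => hprH_eq ▸ hF_pos _ x⟩

/-- well-definedness of the Hessian Adjusted Tempering target:
for a continuous, bounded, positive target `π` with `∫ π^β < ∞` for all `β > 0`, mode points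
`μ_j`, positive definite `Σ_j`, weights `wh_j > 0`, and a measurable mode assignment function
`A` with `A(x,β)` maximising `j ↦ wh_j φ(x; μ_j, Σ_j/β)`, the HAT target
`π_β^H(x) = π(x)^β π(μ_{A(x,β)})^{1-β}` if `A(x,β) = A(x,1)` and `G(x,β)` otherwise
satisfies `0 < ∫ π_β^H < ∞`, so it can be normalised to a probability density. -/
theorem HAT_target_well_defined (d K : ℕ) (hd : 1 ≤ d) (hK : 1 ≤ K)
    (pr : (Fin d → ℝ) → ℝ) (hπpos : ∀ x, 0 < pr x) (hπcont : Continuous pr)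
    (hπbdd : ∃ Cb : ℝ, ∀ x, pr x ≤ Cb)
    (hπint : ∀ β : ℝ, 0 < β → Integrable (fun x : Fin d → ℝ => pr x ^ β))
    (μs : Fin K → Fin d → ℝ) (Ss : Fin K → Matrix (Fin d) (Fin d) ℝ)
    (hSs : ∀ j, (Ss j).PosDef) (wh : Fin K → ℝ) (hwh : ∀ j, 0 < wh j)
    (A : (Fin d → ℝ) → ℝ → Fin K)
    (hAmeas : Measurable (Function.uncurry A))
    (hAmax : ∀ x : Fin d → ℝ, ∀ β : ℝ, 0 < β → ∀ j,
      wh j * gaussDensity d (μs j) (β⁻¹ • Ss j) x ≤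
        wh (A x β) * gaussDensity d (μs (A x β)) (β⁻¹ • Ss (A x β)) x)
    (β : ℝ) (hβ : 0 < β)
    (prH : (Fin d → ℝ) → ℝ)
    (hprH : ∀ x, prH x =
      if A x β = A x 1 then pr x ^ β * pr (μs (A x β)) ^ (1 - β)
      else pr (μs (A x β)) * ((2 * Real.pi) ^ (d : ℝ) * (Ss (A x β)).det) ^ ((1 : ℝ) / 2) *
        gaussDensity d (μs (A x β)) (β⁻¹ • Ss (A x β)) x / β ^ ((d : ℝ) / 2)) :
    Integrable prH ∧ 0 < ∫ x : Fin d → ℝ, prH x :=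
  HAT_target_well_defined_general d K pr hπpos hπint μs Ss hSs A hAmeas β hβ prH hprH
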